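/- arXiv:1502.06982 — 2 statements merged into one kernel-verified Lean document; each statement's English description precedes it below -/
import Mathlib

section
/- The intersection of any family of (r,α)-admissible partitions of V is itself (r,α)-admissible. Consequently there exists a finest (r,α)-admissible partition of V, namely the intersection of all (r,α)-admissible partitions (called the cumulatively merged partition). -/
open scoped ENNReal NNReal
open MeasureTheory

namespace CMPPaper

variable {V : Type*}

/-- Graph distance between two subsets of vertices, valued in `ℝ≥0∞`
(`⊤` when one of the sets is empty). -/
noncomputable def setDist (G : SimpleGraph V) (A B : Set V) : ℝ≥0∞ :=
  ⨅ (x : A) (y : B), (G.dist x.1 y.1 : ℝ≥0∞)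

/-- Total weight `r(A) = Σ_{x ∈ A} r(x) ∈ [0,∞]` of a set of vertices. -/
noncomputable def wt (r : V → ℝ≥0) (A : Set V) : ℝ≥0∞ :=
  ∑' x : A, (r x.1 : ℝ≥0∞)

/-- A partition (encoded as a setoid) of the vertex set is `(r,α)`-admissible if any two
distinct clusters `C ≠ C'` satisfy `d(C,C') > min(r(C), r(C'))^α`. -/
def Admissible (G : SimpleGraph V) (r : V → ℝ≥0) (α : ℝ) (s : Setoid V) : Prop :=
  ∀ C ∈ s.classes, ∀ C' ∈ s.classes, C ≠ C' →
    (min (wt r C) (wt r C')) ^ α < setDist G C C'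

/-- The cumulatively merged partition: the finest `(r,α)`-admissible partition, i.e. the
intersection (infimum as setoids) of all `(r,α)`-admissible partitions. -/
noncomputable def CMP (G : SimpleGraph V) (r : V → ℝ≥0) (α : ℝ) : Setoid V :=
  sInf {s : Setoid V | Admissible G r α s}

/-- The cluster of the CMP containing `x`. -/
def cluster (G : SimpleGraph V) (r : V → ℝ≥0) (α : ℝ) (x : V) : Set V :=
  {y | (CMP G r α) x y}

/-- The ball `B(A, l) = {z : d(z,A) ≤ l}` around a set of vertices. -/
def ballSet (G : SimpleGraph V) (A : Set V) (l : ℝ≥0∞) : Set V :=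
  {z | ∃ a ∈ A, (G.dist z a : ℝ≥0∞) ≤ l}

/-- A subset `H` of the vertices is stable if every cluster `C` of the CMP of the induced
subgraph on `H` (with the restricted weights) satisfies `B(C, r(C)^α) ⊆ H`. -/
def IsStable (G : SimpleGraph V) (r : V → ℝ≥0) (α : ℝ) (H : Set V) : Prop :=
  ∀ C ∈ (CMP (G.induce H) (fun x : H => r x) α).classes,
    ballSet G (Subtype.val '' C) ((wt (fun x : H => r x) C) ^ α) ⊆ H

/-- The stabiliser of `W`: the smallest stable set containing `W`, i.e. the intersection of
all stable sets containing `W`. -/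
def stabiliser (G : SimpleGraph V) (r : V → ℝ≥0) (α : ℝ) (W : Set V) : Set V :=
  ⋂₀ {H : Set V | IsStable G r α H ∧ W ⊆ H}

open Classical in
/-- The merging operator `M_{x,y}`: if the clusters of `x` and `y` are distinct and
`d(x,y) ≤ min(r(𝒞_x), r(𝒞_y))^α`, merge them (take the smallest coarsening of `s`
relating `x` and `y`); otherwise leave the partition unchanged. -/
noncomputable def mergeOp (G : SimpleGraph V) (r : V → ℝ≥0) (α : ℝ) (x y : V)
    (s : Setoid V) : Setoid V :=
  if ¬ s x y ∧ (G.dist x y : ℝ≥0∞) ≤ (min (wt r {u | s x u}) (wt r {u | s y u})) ^ α then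
    sInf {t : Setoid V | s ≤ t ∧ t x y}
  else s

/-- The relation `C ↦ C'` (`C'` descends from `C`) on clusters of the CMP. -/
def Descends (G : SimpleGraph V) (r : V → ℝ≥0) (α : ℝ) (C C' : Set V) : Prop :=
  C ∈ (CMP G r α).classes ∧ C' ∈ (CMP G r α).classes ∧ C ≠ C' ∧
    setDist G C C' ≤ (wt r C) ^ α

/-- Integer part of an extended nonnegative real, valued in `ℕ∞`. -/
noncomputable def efloor (x : ℝ≥0∞) : ℕ∞ :=
  if x = ⊤ then ⊤ else (⌊x.toReal⌋₊ : ℕ∞)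

/-- The bound `max(w log₂ w / 2, 0)` (for `α = 1`), resp. `w^α/(2^α-2)` (for `α ≠ 1`),
on the diameter of a cluster of total weight `w`. -/
noncomputable def diamBound (α : ℝ) (w : ℝ≥0∞) : ℝ≥0∞ :=
  if α = 1 then
    (if w = ⊤ then ⊤ else ENNReal.ofReal (max (w.toReal * Real.logb 2 w.toReal / 2) 0))
  else w ^ α / ((2 : ℝ≥0∞) ^ α - 2)

/-- The relation `C →η C'` on clusters of the CMP:  `d(C,C') ≤ η·r(C)^α`. -/
def EtaDesc (G : SimpleGraph V) (r : V → ℝ≥0) (α η : ℝ) (C C' : Set V) : Prop :=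
  C ∈ (CMP G r α).classes ∧ C' ∈ (CMP G r α).classes ∧ C ≠ C' ∧
    setDist G C C' ≤ ENNReal.ofReal η * (wt r C) ^ α

/-- The `η`-stabiliser of a vertex `x`: the union of `𝒞_x` together with all clusters
reachable from `𝒞_x` by a finite oriented path for the relation `→η`. -/
def etaStab (G : SimpleGraph V) (r : V → ℝ≥0) (α η : ℝ) (x : V) : Set V :=
  ⋃₀ {C' | Relation.ReflTransGen (EtaDesc G r α η) (cluster G r α x) C'}

/-- The path graph on `ℕ`: `m` and `m+1` are adjacent. -/
def pathGraphN : SimpleGraph ℕ := SimpleGraph.fromRel (fun m n => n = m + 1)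

/-- The two-sided path graph on `ℤ`: `k` and `k+1` are adjacent. -/
def pathGraphZ : SimpleGraph ℤ := SimpleGraph.fromRel (fun a b => b = a + 1)

/-- The hypercubic lattice `ℤ^d`: `x` and `y` are adjacent iff `‖x-y‖₁ = 1`. -/
def latticeGraph (d : ℕ) : SimpleGraph (Fin d → ℤ) :=
  SimpleGraph.fromRel (fun x y => (∑ i, |x i - y i|) = 1)

/-- The CMP of the weighted graph `(G, r)` with expansion exponent `α` has an
infinite cluster. -/
def HasInfiniteCluster (G : SimpleGraph V) (r : V → ℝ≥0) (α : ℝ) : Prop :=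
  ∃ C ∈ (CMP G r α).classes, C.Infinite

/-- `w` is an i.i.d. family of Bernoulli(`p`) weights indexed by `V`, under the
probability measure `μ`. -/
def IsBernoulliField {Ω : Type*} [MeasurableSpace Ω] (μ : Measure Ω)
    (p : ℝ) (w : Ω → V → ℝ≥0) : Prop :=
  (∀ x : V, Measurable fun ω => w ω x) ∧
  (∀ ω x, w ω x = 0 ∨ w ω x = 1) ∧
  (∀ x : V, μ {ω | w ω x = 1} = ENNReal.ofReal p) ∧
  ProbabilityTheory.iIndepFun (fun x ω => w ω x) μ

/-- `w` is an i.i.d. family of weights indexed by `V`, each with law `ν`, under the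
probability measure `μ`. -/
def IsIIDField {Ω : Type*} [MeasurableSpace Ω] (μ : Measure Ω)
    (ν : Measure ℝ≥0) (w : Ω → V → ℝ≥0) : Prop :=
  (∀ x : V, Measurable fun ω => w ω x) ∧
  (∀ x : V, μ.map (fun ω => w ω x) = ν) ∧
  ProbabilityTheory.iIndepFun (fun x ω => w ω x) μ

/-! Two vertices in distinct clusters of an intersection of partitions are already separated by
a single member `𝒞ⁱ` of the family. Their clusters in the intersection lie inside their
(distinct) clusters in `𝒞ⁱ`, so passing to the intersection can only decrease the weights and
increase the distance; since `α ≥ 0`, the inequality `min(r(C), r(C'))^α < d(C, C')` survives. -/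

lemma wt_mono (r : V → ℝ≥0) {A B : Set V} (h : A ⊆ B) : wt r A ≤ wt r B :=
  ENNReal.tsum_mono_subtype (fun x => (r x : ℝ≥0∞)) h

lemma setDist_anti (G : SimpleGraph V) {A B A' B' : Set V} (hA : A ⊆ A') (hB : B ⊆ B') :
    setDist G A' B' ≤ setDist G A B :=
  le_iInf₂ fun x y => iInf₂_le_of_le ⟨x.1, hA x.2⟩ ⟨y.1, hB y.2⟩ le_rfl

section Admissible

variable {G : SimpleGraph V} {r : V → ℝ≥0} {α : ℝ} {s t : Setoid V}

lemma admissible_iff : Admissible G r α s ↔ ∀ c c', ¬ s c c' →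
    (min (wt r {x | s x c}) (wt r {x | s x c'})) ^ α < setDist G {x | s x c} {x | s x c'} := by
  refine ⟨fun h c c' hcc => h _ (s.mem_classes c) _ (s.mem_classes c') fun heq => ?_, ?_⟩
  · exact hcc (heq ▸ s.refl c : c ∈ {x | s x c'})
  · rintro h _ ⟨c, rfl⟩ _ ⟨c', rfl⟩ hne
    refine h c c' fun hcc => hne ?_
    ext x
    exact ⟨fun hx => s.trans hx hcc, fun hx => s.trans hx (s.symm hcc)⟩

lemma Admissible.lt_setDist_of_le (ht : Admissible G r α t) (hα : 0 ≤ α) (hst : s ≤ t)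
    {c c' : V} (hcc : ¬ t c c') :
    (min (wt r {x | s x c}) (wt r {x | s x c'})) ^ α < setDist G {x | s x c} {x | s x c'} := by
  have hc : {x | s x c} ⊆ {x | t x c} := fun _ hx => hst hx
  have hc' : {x | s x c'} ⊆ {x | t x c'} := fun _ hx => hst hx
  calc (min (wt r {x | s x c}) (wt r {x | s x c'})) ^ α
      ≤ (min (wt r {x | t x c}) (wt r {x | t x c'})) ^ α :=
        ENNReal.rpow_le_rpow (min_le_min (wt_mono r hc) (wt_mono r hc')) hα
    _ < setDist G {x | t x c} {x | t x c'} := admissible_iff.1 ht c c' hcc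
    _ ≤ setDist G {x | s x c} {x | s x c'} := setDist_anti G hc hc'

lemma admissible_sInf (hα : 0 ≤ α) {S : Set (Setoid V)} (hS : ∀ s ∈ S, Admissible G r α s) :
    Admissible G r α (sInf S) := by
  refine admissible_iff.2 fun c c' hcc => ?_
  obtain ⟨t, htS, ht⟩ : ∃ t ∈ S, ¬ t c c' := by
    simpa [Setoid.sInf_def] using hcc
  exact (hS t htS).lt_setDist_of_le hα (sInf_le htS) ht

end Admissible

theorem intersection_admissible_and_finest_general
    {V : Type*} (G : SimpleGraph V)
    (r : V → ℝ≥0) (α : ℝ) (hα : 1 ≤ α) :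
    (∀ (ι : Type*) (f : ι → Setoid V), (∀ i, Admissible G r α (f i)) →
        Admissible G r α (⨅ i, f i)) ∧
    Admissible G r α (CMP G r α) ∧
    (∀ s : Setoid V, Admissible G r α s → CMP G r α ≤ s) := by
  have hα₀ : 0 ≤ α := zero_le_one.trans hα
  exact ⟨fun _ _ hf => admissible_sInf hα₀ (Set.forall_mem_range.2 hf),
    admissible_sInf hα₀ fun _ hs => hs, fun _ hs => sInf_le hs⟩

/-- The intersection of any family of `(r,α)`-admissible partitions is `(r,α)`-admissible;
consequently the CMP (the intersection of all admissible partitions) is itself admissible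
and is the finest admissible partition. -/
theorem intersection_admissible_and_finest
    {V : Type*} (G : SimpleGraph V) (hconn : G.Connected)
    (hlf : ∀ v : V, (G.neighborSet v).Finite)
    (r : V → ℝ≥0) (α : ℝ) (hα : 1 ≤ α) :
    (∀ (ι : Type*) (f : ι → Setoid V), (∀ i, Admissible G r α (f i)) →
        Admissible G r α (⨅ i, f i)) ∧
    Admissible G r α (CMP G r α) ∧
    (∀ s : Setoid V, Admissible G r α s → CMP G r α ≤ s) :=
  intersection_admissible_and_finest_general G r α hα

end CMPPaper
end

section
/- Let α ≥ 1 and define f : [0,∞) → [0,∞) by f(x) = max(x·log₂ x/2, 0) if α = 1 and f(x) = x^α/(2^α − 2) if α > 1. Then for all real numbers a, b ≥ 1, f(a+b) ≥ f(a) + f(b) + min(a,b)^α. -/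
/-!
Assume `a ≤ b`. For `α > 1`, after multiplying by `2^α - 2` the inequality reads
`(a + b)^α - b^α ≥ (a + a)^α - a^α`: the increments of the convex function `x ↦ x^α` grow
with `x`. For `α = 1` every `x log₂ x` with `x ≥ 1` is nonnegative, and the inequality is the sum
of `a log₂ (2a) ≤ a log₂ (a + b)` and `b log₂ b + a ≤ b log₂ (a + b)`; the latter is
`log₂ (1 + t) ≥ t` for `t = a / b ∈ [0, 1]`, i.e. Bernoulli's `2^t ≤ 1 + t`.
-/

open scoped ENNReal NNReal
open MeasureTheory

theorem ConvexOn.map_add_sub_map_le_of_le {𝕜 : Type*} [Field 𝕜] [LinearOrder 𝕜]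
    [IsStrictOrderedRing 𝕜] {s : Set 𝕜} {f : 𝕜 → 𝕜} (hf : ConvexOn 𝕜 s f) {x y c : 𝕜}
    (hx : x ∈ s) (hyc : y + c ∈ s) (hxy : x ≤ y) (hc : 0 ≤ c) :
    f (x + c) - f x ≤ f (y + c) - f y := by
  rcases hc.eq_or_lt with rfl | hc
  · simp
  -- both secants, over `[x, x + c]` and `[y, y + c]`, are compared with the one over `[x, y + c]`
  have hmem : ∀ z, x ≤ z → z ≤ y + c → z ∈ s := fun z hxz hzy =>
    (convex_iff_ordConnected.mp hf.1).out hx hyc ⟨hxz, hzy⟩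
  have hleft := hf.secant_mono hx (hmem (x + c) (by linarith) (by linarith)) hyc
    (by linarith) (by linarith) (by linarith : x + c ≤ y + c)
  have hright := hf.secant_mono hyc hx (hmem y hxy (by linarith))
    (by linarith) (by linarith) hxy
  rw [← neg_div_neg_eq, neg_sub, neg_sub] at hright
  rw [add_sub_cancel_left] at hleft
  rw [show y - (y + c) = -c by ring, div_neg, ← neg_div, neg_sub] at hright
  exact (div_le_div_iff_of_pos_right hc).mp (hleft.trans hright)

theorem rpow_add_rpow_add_mul_rpow_le {α a b : ℝ} (hα : 1 ≤ α) (ha : 0 ≤ a) (hab : a ≤ b) :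
    a ^ α + b ^ α + (2 ^ α - 2) * a ^ α ≤ (a + b) ^ α := by
  have hincr := (convexOn_rpow hα).map_add_sub_map_le_of_le (Set.mem_Ici.mpr ha)
    (Set.mem_Ici.mpr (by linarith : 0 ≤ b + a)) hab ha
  have htwo : (a + a) ^ α = 2 ^ α * a ^ α := by
    rw [← two_mul, Real.mul_rpow zero_le_two ha]
  rw [htwo, add_comm b a] at hincr
  linarith

theorem Real.le_logb_two_one_add {t : ℝ} (ht₀ : 0 ≤ t) (ht₁ : t ≤ 1) :
    t ≤ Real.logb 2 (1 + t) := by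
  rw [Real.le_logb_iff_rpow_le one_lt_two (by linarith)]
  simpa [one_add_one_eq_two, mul_one, add_comm] using
    rpow_one_add_le_one_add_mul_self (s := 1) (by norm_num) ht₀ ht₁

theorem mul_logb_two_add_mul_logb_two_add_le {a b : ℝ} (ha : 0 < a) (hab : a ≤ b) :
    a * Real.logb 2 a + b * Real.logb 2 b + 2 * a ≤ (a + b) * Real.logb 2 (a + b) := by
  have hb : 0 < b := ha.trans_le hab
  have hsmall : a * (Real.logb 2 a + 1) ≤ a * Real.logb 2 (a + b) := by
    gcongr
    calc Real.logb 2 a + 1 = Real.logb 2 (2 * a) := by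
          rw [Real.logb_mul two_ne_zero ha.ne', Real.logb_self_eq_one one_lt_two, add_comm]
      _ ≤ Real.logb 2 (a + b) := Real.logb_le_logb_of_le one_lt_two (by positivity) (by linarith)
  have hlarge : b * (Real.logb 2 b + a / b) ≤ b * Real.logb 2 (a + b) := by
    gcongr
    calc Real.logb 2 b + a / b ≤ Real.logb 2 b + Real.logb 2 (1 + a / b) := by
          gcongr
          exact Real.le_logb_two_one_add (by positivity) ((div_le_one hb).mpr hab)
      _ = Real.logb 2 (a + b) := by
          rw [← Real.logb_mul hb.ne' (by positivity), mul_one_add, mul_div_cancel₀ a hb.ne',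
            add_comm]
  rw [mul_add, mul_div_cancel₀ a hb.ne'] at hlarge
  linarith

namespace CMPPaper

/-- The function `f(x) = max(x·log₂ x/2, 0)` (if `α = 1`), `f(x) = x^α/(2^α − 2)` (if `α > 1`)
satisfies the functional inequality `f(a+b) ≥ f(a) + f(b) + min(a,b)^α` for all `a, b ≥ 1`. -/
theorem fdiam_superadditive (α : ℝ) (hα : 1 ≤ α) (f : ℝ → ℝ)
    (hf : ∀ x : ℝ, f x = if α = 1 then max (x * Real.logb 2 x / 2) 0 else x ^ α / (2 ^ α - 2))
    (a b : ℝ) (ha : 1 ≤ a) (hb : 1 ≤ b) :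
    f a + f b + min a b ^ α ≤ f (a + b) := by
  wlog hab : a ≤ b generalizing a b
  · simpa only [add_comm, min_comm] using this b a hb ha (le_of_not_ge hab)
  rw [hf, hf, hf, min_eq_left hab]
  rcases hα.eq_or_lt with rfl | hα₁
  · have hlog : ∀ x : ℝ, 1 ≤ x → max (x * Real.logb 2 x / 2) 0 = x * Real.logb 2 x / 2 :=
      fun x hx => max_eq_left (by have := Real.logb_nonneg one_lt_two hx; positivity)
    simp only [if_true, Real.rpow_one, hlog a ha, hlog b hb, hlog (a + b) (by linarith)]
    linarith [mul_logb_two_add_mul_logb_two_add_le (by linarith : 0 < a) hab]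
  · have hd : 0 < (2 : ℝ) ^ α - 2 := by
      have := Real.rpow_lt_rpow_of_exponent_lt one_lt_two hα₁
      rw [Real.rpow_one] at this
      linarith
    simp only [if_neg hα₁.ne']
    rw [← add_div, div_add' _ _ _ hd.ne', div_le_div_iff_of_pos_right hd]
    linarith [rpow_add_rpow_add_mul_rpow_le hα (by linarith : 0 ≤ a) hab]

end CMPPaper
end
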